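/- arXiv:1509.05220 — 4 statements merged into one kernel-verified Lean document; each statement's English description precedes it below -/
import Mathlib

section
/- Let p and q be coprime positive integers and set m = p/q. Let b and b' be real numbers such that mi + b ∉ ℤ and mi + b' ∉ ℤ for every integer i (i.e. the lines y = mx + b and y = mx + b' avoid all integer lattice points). Then there exists an integer s such that for every integer k, ⌊m + {b' + (k-1)m}⌋ = ⌊m + {b + (k+s-1)m}⌋. In other words, viewed as a periodic word up to cyclic shift, the Sturmian sequence associated to the rational rotation number m is independent of the choice of intercept. -/
/-!
Write `b = (⌊b q⌋ + {b q}) / q`. Then the `k`-th exponent is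
`(p + (⌊b q⌋ + (k - 1) p) mod q) div q`: the intercept enters only through the residue of
`⌊b q⌋` modulo `q`. As `p` is invertible modulo `q`, a shift `k ↦ k + s` moves that residue by
`s p` and so reaches every residue, in particular the one coming from `b'`.
-/

namespace Int

variable {K : Type*} [Field K] [LinearOrder K] [IsOrderedRing K] [FloorRing K]

theorem fract_div_natCast (x : K) (n : ℕ) :
    fract (x / n) = (((⌊x⌋ % n : ℤ) : K) + fract x) / n := by
  rcases eq_or_ne n 0 with rfl | hn
  · simp
  have hfloor : (⌊x⌋ : K) = n * ((⌊x⌋ / n : ℤ) : K) + ((⌊x⌋ % n : ℤ) : K) := by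
    exact_mod_cast (mul_ediv_add_emod ⌊x⌋ n).symm
  rw [fract, floor_div_natCast, fract, hfloor]
  field_simp
  ring

theorem floor_intCast_div_natCast_add_fract_div (z : ℤ) (x : K) (n : ℕ) :
    ⌊(z : K) / n + fract (x / n)⌋ = (z + ⌊x⌋ % n) / n := by
  rw [fract_div_natCast, ← add_div, floor_div_natCast, ← add_assoc, ← cast_add,
    floor_intCast_add, floor_fract, add_zero]

theorem floor_div_add_fract_add_mul_div (p : ℤ) {q : ℕ} (hq : q ≠ 0) (b : K) (j : ℤ) :
    ⌊(p : K) / q + fract (b + j * (p / q))⌋ = (p + (⌊b * q⌋ + j * p) % q) / q := by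
  have hline : b + j * (p / q) = (b * q + (j * p : ℤ)) / q := by
    push_cast
    field_simp
  rw [hline, floor_intCast_div_natCast_add_fract_div, floor_add_intCast]

theorem exists_add_mul_modEq_of_isCoprime {p q : ℤ} (hpq : IsCoprime p q) (a a' : ℤ) :
    ∃ s : ℤ, a + s * p ≡ a' [ZMOD q] := by
  obtain ⟨u, v, huv⟩ := hpq
  refine ⟨(a' - a) * u, modEq_iff_dvd.mpr ⟨(a' - a) * v, ?_⟩⟩
  linear_combination (a - a') * huv

end Int

theorem sturmian_word_independent_of_intercept_general (p q : ℕ) (hq : 0 < q)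
    (hpq : Nat.Coprime p q) (m : ℝ) (hm : m = (p : ℝ) / (q : ℝ)) (b b' : ℝ) :
    ∃ s : ℤ, ∀ k : ℤ,
      ⌊m + Int.fract (b' + ((k : ℝ) - 1) * m)⌋
        = ⌊m + Int.fract (b + ((k : ℝ) + (s : ℝ) - 1) * m)⌋ := by
  obtain ⟨s, hs⟩ := Int.exists_add_mul_modEq_of_isCoprime (Nat.isCoprime_iff_coprime.mpr hpq)
    ⌊b * q⌋ ⌊b' * q⌋
  refine ⟨s, fun k => ?_⟩
  have hword' := Int.floor_div_add_fract_add_mul_div p hq.ne' b' (k - 1)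
  have hword := Int.floor_div_add_fract_add_mul_div p hq.ne' b (k + s - 1)
  push_cast at hword' hword
  have hmod : ⌊b * q⌋ + (k + s - 1) * p ≡ ⌊b' * q⌋ + (k - 1) * p [ZMOD q] := by
    convert hs.add_right ((k - 1) * p) using 1
    ring
  rw [hm, hword', hword, hmod]

/-- Viewed as a periodic word up to cyclic shift, the Sturmian sequence associated to a
rational rotation number `m = p/q` (with `p, q` coprime) is independent of the intercept. -/
theorem sturmian_word_independent_of_intercept (p q : ℕ) (hp : 0 < p) (hq : 0 < q)
    (hpq : Nat.Coprime p q) (m : ℝ) (hm : m = (p : ℝ) / (q : ℝ)) (b b' : ℝ)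
    (hb : ∀ i : ℤ, ∀ z : ℤ, m * (i : ℝ) + b ≠ (z : ℝ))
    (hb' : ∀ i : ℤ, ∀ z : ℤ, m * (i : ℝ) + b' ≠ (z : ℝ)) :
    ∃ s : ℤ, ∀ k : ℤ,
      ⌊m + Int.fract (b' + ((k : ℝ) - 1) * m)⌋
        = ⌊m + Int.fract (b + ((k : ℝ) + (s : ℝ) - 1) * m)⌋ :=
  sturmian_word_independent_of_intercept_general p q hq hpq m hm b b'
end

section
/- Let p and q be coprime positive integers, set m = p/q, and let b be a real number such that the line y = mx + b passes through no point of the half-integer lattice ((1/2)ℤ)². Then the set of x with 0 ≤ x < q for which 2x ∈ ℤ or 2(mx + b) ∈ ℤ has exactly 2(p + q) elements. (A periodic orbit with rotation number W = p/q crosses the syzygy windows exactly 2(p+q) times in one period, giving a syzygy sequence of length 2(p+q).) -/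
/-- A periodic orbit with rotation number `W = p/q` crosses the syzygy windows exactly
`2(p+q)` times in one period. -/
theorem syzygy_sequence_length (p q : ℕ) (hp : 0 < p) (hq : 0 < q)
    (hpq : Nat.Coprime p q) (m : ℝ) (hm : m = (p : ℝ) / (q : ℝ)) (b : ℝ)
    (h : ∀ i j : ℤ, m * ((i : ℝ) / 2) + b ≠ (j : ℝ) / 2) :
    {x : ℝ | 0 ≤ x ∧ x < (q : ℝ) ∧
        ((∃ z : ℤ, 2 * x = (z : ℝ)) ∨ (∃ z : ℤ, 2 * (m * x + b) = (z : ℝ)))}.ncard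
      = 2 * (p + q) := by
  have hq0 : (0:ℝ) < q := by exact_mod_cast hq
  have hp0 : (0:ℝ) < p := by exact_mod_cast hp
  have hm0 : 0 < m := by rw [hm]; positivity
  have hmq : m * q = p := by rw [hm]; field_simp
  set c : ℤ := ⌈2 * b⌉ with hc
  have hc1 : 2 * b ≤ (c:ℝ) := Int.le_ceil _
  have hc2 : (c:ℝ) < 2 * b + 1 := Int.ceil_lt_add_one _
  set f : ℕ → ℝ := fun k => (k:ℝ) / 2 with hf
  set g : ℕ → ℝ := fun j => ((c:ℝ) + j - 2*b) / (2*m) with hg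
  have hgval : ∀ j : ℕ, 2 * (m * g j + b) = (c:ℝ) + j := by
    intro j
    simp only [hg]
    field_simp
    ring
  set F : Finset ℝ := ((Finset.range (2*q)).image f) ∪ ((Finset.range (2*p)).image g)
    with hF
  have hset : {x : ℝ | 0 ≤ x ∧ x < (q : ℝ) ∧
        ((∃ z : ℤ, 2 * x = (z : ℝ)) ∨ (∃ z : ℤ, 2 * (m * x + b) = (z : ℝ)))} = ↑F := by
    ext x
    simp only [Set.mem_setOf_eq, hF, Finset.coe_union, Set.mem_union, Finset.coe_image,
      Set.mem_image, Finset.mem_coe, Finset.mem_range]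
    constructor
    · rintro ⟨hx0, hxq, ⟨z, hz⟩ | ⟨z, hz⟩⟩
      · left
        have hz0 : 0 ≤ z := by exact_mod_cast hz ▸ (by linarith : (0:ℝ) ≤ 2 * x)
        have hz1 : (z:ℝ) < 2*q := by rw [← hz]; push_cast; linarith
        have hz1' : z < 2*(q:ℤ) := by exact_mod_cast hz1
        refine ⟨z.toNat, ?_, ?_⟩
        · omega
        · have hzn : ((z.toNat : ℕ) : ℝ) = (z:ℝ) := by
            exact_mod_cast congrArg (Int.cast : ℤ → ℝ) (Int.toNat_of_nonneg hz0)
          simp only [hf, hzn]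
          linarith
      · right
        have hzb : 2*b ≤ (z:ℝ) := by
          rw [← hz]; nlinarith
        have hcz : c ≤ z := Int.ceil_le.mpr hzb
        have hzu : (z:ℝ) < (c:ℝ) + 2*p := by
          rw [← hz]
          have : m * x < m * q := by nlinarith
          rw [hmq] at this
          linarith
        have hzu' : z < c + 2*(p:ℤ) := by exact_mod_cast hzu
        refine ⟨(z - c).toNat, ?_, ?_⟩
        · omega
        · have hzn : (((z - c).toNat : ℕ) : ℝ) = (z:ℝ) - c := by
            have := Int.toNat_of_nonneg (by omega : 0 ≤ z - c)
            exact_mod_cast congrArg (Int.cast : ℤ → ℝ) this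
          simp only [hg, hzn]
          rw [div_eq_iff (by positivity)]
          linarith [hz]
    · rintro (⟨k, hk, rfl⟩ | ⟨j, hj, rfl⟩)
      · refine ⟨by positivity, ?_, Or.inl ⟨(k:ℤ), by push_cast [hf]; ring⟩⟩
        simp only [hf]
        rw [div_lt_iff₀ (by norm_num : (0:ℝ) < 2)]
        have hk' : k < q * 2 := by omega
        exact_mod_cast hk'
      · have hgj0 : 0 ≤ g j := by
          simp only [hg]
          apply div_nonneg _ (by positivity)
          have : (0:ℝ) ≤ (j:ℝ) := by positivity
          linarith
        have hgjq : g j < q := by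
          simp only [hg]
          rw [div_lt_iff₀ (by positivity)]
          have hj1 : (j:ℝ) + 1 ≤ 2*p := by exact_mod_cast Nat.succ_le_of_lt hj
          have hqm : (q:ℝ) * (2*m) = 2 * p := by rw [mul_comm, mul_assoc, hmq]
          linarith
        exact ⟨hgj0, hgjq, Or.inr ⟨c + j, by rw [hgval]; push_cast; ring⟩⟩
  rw [hset, Set.ncard_coe_finset, hF]
  have hfi : Function.Injective f := fun a b hab => by
    simp only [hf] at hab
    exact_mod_cast (by linarith [hab] : (a:ℝ) = b)
  have hgi : Function.Injective g := fun a b hab => by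
    have := hgval a
    rw [hab, hgval b] at this
    exact_mod_cast (by linarith : (a:ℝ) = b)
  have hdisj : Disjoint ((Finset.range (2*q)).image f) ((Finset.range (2*p)).image g) := by
    rw [Finset.disjoint_left]
    rintro x hx hx'
    simp only [Finset.mem_image, Finset.mem_range] at hx hx'
    obtain ⟨k, hk, rfl⟩ := hx
    obtain ⟨j, hj, hgj⟩ := hx'
    have := hgval j
    rw [hgj] at this
    exact h k (c + j) (by push_cast; simp only [hf] at this ⊢; linarith)
  rw [Finset.card_union_of_disjoint hdisj, Finset.card_image_of_injective _ hfi,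
    Finset.card_image_of_injective _ hgi, Finset.card_range, Finset.card_range]
  ring
end

section
/- Let p and q be coprime positive integers with q ≥ 2, set m = p/q, and let b be a real number such that mi + b ∉ ℤ for every integer i. Then there exist integers k and k' such that ⌊m + {b + (k-1)m}⌋ = ⌊m⌋ + 1 and ⌊m + {b + (k'-1)m}⌋ = ⌊m⌋. That is, when the rotation number is rational with denominator at least 2, both values ⌊m⌋ and ⌊m⌋+1 actually occur among the Sturmian exponents n_k. -/
/-- Since `gcd p q = 1`, every residue `r` mod `q` is realized by the orbit:
there is `k` with `fract (b + (k-1)·p/q) = fract (b + r/q)`. -/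
lemma sturmian_orbit_hits (p q : ℕ) (hq : 0 < q) (hpq : Nat.Coprime p q)
    (b : ℝ) (r : ℤ) :
    ∃ k : ℤ, Int.fract (b + ((k : ℝ) - 1) * ((p : ℝ) / (q : ℝ)))
      = Int.fract (b + (r : ℝ) / (q : ℝ)) := by
  have hq0 : (q : ℝ) ≠ 0 := by
    have : (0:ℝ) < q := by exact_mod_cast hq
    linarith
  obtain ⟨a, c, h⟩ := (Nat.isCoprime_iff_coprime.mpr hpq)
  refine ⟨1 + r * a, ?_⟩
  have h' : (a : ℝ) * p + c * q = 1 := by exact_mod_cast h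
  have hEq : b + ((((1 + r * a) : ℤ) : ℝ) - 1) * ((p : ℝ) / (q : ℝ))
      = (b + (r : ℝ) / (q : ℝ)) + ((-(r * c) : ℤ) : ℝ) := by
    push_cast
    field_simp
    linear_combination (r : ℝ) * h'
  rw [hEq, Int.fract_add_intCast]

/-- For a rational rotation number with denominator at least 2, both values `⌊m⌋` and
`⌊m⌋ + 1` occur among the Sturmian exponents. -/
theorem both_exponent_values_occur (p q : ℕ) (hp : 0 < p) (hq : 2 ≤ q)
    (hpq : Nat.Coprime p q) (m : ℝ) (hm : m = (p : ℝ) / (q : ℝ)) (b : ℝ)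
    (hb : ∀ i : ℤ, ∀ z : ℤ, m * (i : ℝ) + b ≠ (z : ℝ)) :
    (∃ k : ℤ, ⌊m + Int.fract (b + ((k : ℝ) - 1) * m)⌋ = ⌊m⌋ + 1) ∧
    (∃ k' : ℤ, ⌊m + Int.fract (b + ((k' : ℝ) - 1) * m)⌋ = ⌊m⌋) := by
  subst hm
  have hq0' : 0 < q := by omega
  have hq0 : (0 : ℝ) < (q : ℝ) := by exact_mod_cast hq0'
  -- fractional part of b and its grid position
  set f := Int.fract b with hfdef
  have hf0 : 0 ≤ f := Int.fract_nonneg b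
  have hf1 : f < 1 := Int.fract_lt_one b
  set u : ℤ := ⌊(q : ℝ) * f⌋ with hudef
  have hu0 : 0 ≤ u := Int.floor_nonneg.mpr (by positivity)
  have huq : u < q := Int.floor_lt.mpr (by push_cast; nlinarith)
  have hul : (u : ℝ) ≤ (q : ℝ) * f := Int.floor_le _
  have huu : (q : ℝ) * f < u + 1 := Int.lt_floor_add_one _
  have huq' : (u : ℝ) ≤ (q : ℝ) - 1 := by
    have h' : ((u + 1 : ℤ) : ℝ) ≤ ((q : ℤ) : ℝ) := by
      exact_mod_cast Int.lt_iff_add_one_le.mp huq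
    push_cast at h'
    linarith
  -- fractional part of m = p/q
  have hpm0 : p % q ≠ 0 := by
    intro h
    have hd : q ∣ p := Nat.dvd_of_mod_eq_zero h
    have := Nat.Coprime.eq_one_of_dvd hpq.symm hd
    omega
  have hpm1 : (1 : ℝ) ≤ ((p % q : ℕ) : ℝ) := by
    have : 1 ≤ p % q := Nat.one_le_iff_ne_zero.mpr hpm0
    exact_mod_cast this
  have hpm2 : ((p % q : ℕ) : ℝ) ≤ (q : ℝ) - 1 := by
    have h' : p % q ≤ q - 1 := by have := Nat.mod_lt p hq0'; omega
    have h2 : ((p % q : ℕ) : ℝ) ≤ ((q - 1 : ℕ) : ℝ) := by exact_mod_cast h'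
    rw [Nat.cast_sub (by omega)] at h2
    simpa using h2
  have hdm : (p : ℝ) = (q : ℝ) * ((p / q : ℕ) : ℝ) + ((p % q : ℕ) : ℝ) := by
    exact_mod_cast (Nat.div_add_mod p q).symm
  have hfracm : Int.fract ((p : ℝ) / q) = ((p % q : ℕ) : ℝ) / q := by
    have h1 : Int.fract ((p : ℝ) / q) = Int.fract (((p % q : ℕ) : ℝ) / q) := by
      rw [Int.fract_eq_fract]
      refine ⟨((p / q : ℕ) : ℤ), ?_⟩
      have h2 : ((p:ℝ)/q) - ((p % q : ℕ):ℝ)/q = ((p / q : ℕ):ℝ) := by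
        field_simp; linarith [hdm]
      rw [Int.cast_natCast]
      exact h2
    rw [h1, Int.fract_eq_self.mpr ⟨by positivity, by rw [div_lt_one hq0]; linarith⟩]
  have hmfloor : (⌊(p : ℝ) / q⌋ : ℝ) = (p : ℝ) / q - Int.fract ((p : ℝ) / q) :=
    (Int.self_sub_fract _).symm
  -- shift b to its fractional part
  have hshift : ∀ r : ℤ, Int.fract (b + (r : ℝ) / q) = Int.fract (f + (r : ℝ) / q) := by
    intro r
    have h' : b + (r : ℝ) / q = (f + (r : ℝ) / q) + ((⌊b⌋ : ℤ) : ℝ) := by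
      rw [hfdef]; unfold Int.fract; ring
    rw [h', Int.fract_add_intCast]
  constructor
  · -- value ⌊m⌋ + 1 : take r = q - 1 - u
    obtain ⟨k, hk⟩ := sturmian_orbit_hits p q hq0' hpq b ((q : ℤ) - 1 - u)
    refine ⟨k, ?_⟩
    rw [hk, hshift]
    have hr : (((q : ℤ) - 1 - u : ℤ) : ℝ) = (q : ℝ) - 1 - u := by push_cast; ring
    rw [hr]
    set F := f + ((q : ℝ) - 1 - u) / q with hFdef
    have hFself : Int.fract F = F := by
      apply Int.fract_eq_self.mpr
      constructor
      · have hnn : (0:ℝ) ≤ ((q : ℝ) - 1 - u) / q := by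
          apply div_nonneg _ hq0.le; linarith
        rw [hFdef]; linarith
      · rw [hFdef, add_comm, ← lt_sub_iff_add_lt, div_lt_iff₀ hq0]
        nlinarith
    rw [hFself]
    have hsum : Int.fract ((p:ℝ)/q) + F
        = (((p % q : ℕ) : ℝ) + (q : ℝ) * f + ((q:ℝ) - 1 - u)) / q := by
      rw [hfracm, hFdef]; field_simp; ring
    have h1 : (1 : ℝ) ≤ Int.fract ((p:ℝ)/q) + F := by
      rw [hsum, le_div_iff₀ hq0]; linarith
    have h2 : Int.fract ((p:ℝ)/q) + F < 2 := by
      rw [hsum, div_lt_iff₀ hq0]; linarith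
    apply Int.floor_eq_iff.mpr
    constructor
    · push_cast; linarith
    · push_cast; linarith
  · -- value ⌊m⌋ : take r = -u
    obtain ⟨k, hk⟩ := sturmian_orbit_hits p q hq0' hpq b (-u)
    refine ⟨k, ?_⟩
    rw [hk, hshift]
    have hr : ((-u : ℤ) : ℝ) = -(u : ℝ) := by push_cast; ring
    rw [hr]
    set F := f + (-(u : ℝ)) / q with hFdef
    have hdivle : (u : ℝ) / q ≤ f := by rw [div_le_iff₀ hq0]; linarith
    have hdivlt : f < ((u : ℝ) + 1) / q := by rw [lt_div_iff₀ hq0]; linarith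
    have hsplit : ((u : ℝ) + 1) / q = (u : ℝ) / q + 1 / q := add_div _ _ _
    have h1q : (1:ℝ)/q ≤ 1 := by
      rw [div_le_one hq0]
      exact_mod_cast hq0'
    have hFself : Int.fract F = F := by
      apply Int.fract_eq_self.mpr
      constructor
      · rw [hFdef, neg_div]; linarith
      · rw [hFdef, neg_div]; linarith
    rw [hFself]
    have hsum : Int.fract ((p:ℝ)/q) + F
        = (((p % q : ℕ) : ℝ) + (q : ℝ) * f + (-(u:ℝ))) / q := by
      rw [hfracm, hFdef]; field_simp; ring
    have h1 : (0 : ℝ) ≤ Int.fract ((p:ℝ)/q) + F := by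
      rw [hsum, le_div_iff₀ hq0]; linarith
    have h2 : Int.fract ((p:ℝ)/q) + F < 1 := by
      rw [hsum, div_lt_iff₀ hq0]; linarith
    apply Int.floor_eq_iff.mpr
    constructor
    · linarith
    · push_cast; linarith
end

section
/- Let m₁, m₂, d > 0 and let x, y, p_x, p_y : ℝ → ℝ be differentiable functions such that (x(t), y(t)) ≠ (−d, 0) and (x(t), y(t)) ≠ (d, 0) for all t, satisfying Hamilton's equations for the two-center Hamiltonian: x' = p_x, y' = p_y, p_x' = −m₁(x+d)/((x+d)² + y²)^{3/2} − m₂(x−d)/((x−d)² + y²)^{3/2}, p_y' = −m₁ y/((x+d)² + y²)^{3/2} − m₂ y/((x−d)² + y²)^{3/2}. Then Euler's function G(t) = (1/2)(x(t) p_y(t) − y(t) p_x(t))² + (1/2) d² p_x(t)² + d·x(t)·( m₁/√((x(t)+d)² + y(t)²) − m₂/√((x(t)−d)² + y(t)²) ) is constant in t. (Euler's second integral of the two-center problem.) -/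
/-!
Write `L = x p_y - y p_x` and `r_c` for the distance to a center `(c, 0)`. Since the equations of
motion are linear in the forces of the two centers, and `d² = (-d)²`, the derivative of `G` along a
solution splits into one contribution per center, and each contribution vanishes identically: it is
a polynomial identity once `r_c² = (x - c)² + y²` is used.
-/

open Real

theorem sq_add_sq_pos_of_ne {a b c : ℝ} (h : (a, b) ≠ (c, 0)) : 0 < (a - c) ^ 2 + b ^ 2 := by
  by_contra! hle
  have ha : a - c = 0 := by nlinarith [sq_nonneg (a - c), sq_nonneg b]
  have hb : b = 0 := by nlinarith [sq_nonneg (a - c), sq_nonneg b]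
  exact h (by rw [sub_eq_zero.1 ha, hb])

theorem Real.rpow_three_halves {r : ℝ} (hr : 0 ≤ r) : r ^ ((3 : ℝ) / 2) = √r ^ 3 := by
  rw [rpow_div_two_eq_sqrt 3 hr, ← rpow_natCast]
  norm_num

theorem HasDerivAt.const_div_sqrt_dist {x y : ℝ → ℝ} {x' y' t : ℝ} (m c : ℝ)
    (hx : HasDerivAt x x' t) (hy : HasDerivAt y y' t) (hpos : 0 < (x t - c) ^ 2 + y t ^ 2) :
    HasDerivAt (fun τ => m / √((x τ - c) ^ 2 + y τ ^ 2))
      (-(m * ((x t - c) * x' + y t * y')) / √((x t - c) ^ 2 + y t ^ 2) ^ 3) t := by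
  have hr := sqrt_pos.2 hpos
  have hsq := (((hx.sub_const c).fun_pow 2).fun_add (hy.fun_pow 2)).sqrt hpos.ne'
  refine ((hasDerivAt_const t m).div hsq hr.ne').congr_deriv ?_
  rw [pow_succ √_ 2, sq_sqrt hpos.le]
  field_simp
  ring

/-- The derivative of `½ L² + ½ c² p_x² - c x m / r` along the flow of a single center `(c, 0)` of
mass `m`. -/
theorem euler_center_identity (c m x y px py r : ℝ) (hr : r ≠ 0)
    (hr2 : r ^ 2 = (x - c) ^ 2 + y ^ 2) :
    (x * py - y * px) * (x * (-(m * y / r ^ 3)) - y * (-(m * (x - c) / r ^ 3)))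
      + c ^ 2 * px * (-(m * (x - c) / r ^ 3))
      - c * px * (m / r) - c * x * (-(m * ((x - c) * px + y * py)) / r ^ 3) = 0 := by
  have hmr : m / r = m * r ^ 2 / r ^ 3 := by field_simp
  rw [hmr, hr2]
  field_simp
  ring

theorem euler_integral_constant_general (m₁ m₂ d : ℝ)
    (x y px py : ℝ → ℝ)
    (hne₁ : ∀ t, (x t, y t) ≠ (-d, 0))
    (hne₂ : ∀ t, (x t, y t) ≠ (d, 0))
    (hx : ∀ t, HasDerivAt x (px t) t)
    (hy : ∀ t, HasDerivAt y (py t) t)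
    (hpx : ∀ t, HasDerivAt px
      (-(m₁ * (x t + d) / ((x t + d) ^ 2 + y t ^ 2) ^ ((3 : ℝ) / 2))
        - m₂ * (x t - d) / ((x t - d) ^ 2 + y t ^ 2) ^ ((3 : ℝ) / 2)) t)
    (hpy : ∀ t, HasDerivAt py
      (-(m₁ * y t / ((x t + d) ^ 2 + y t ^ 2) ^ ((3 : ℝ) / 2))
        - m₂ * y t / ((x t - d) ^ 2 + y t ^ 2) ^ ((3 : ℝ) / 2)) t) :
    ∀ t s : ℝ,
      (1 / 2) * (x t * py t - y t * px t) ^ 2 + (1 / 2) * d ^ 2 * px t ^ 2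
        + d * x t * (m₁ / Real.sqrt ((x t + d) ^ 2 + y t ^ 2)
          - m₂ / Real.sqrt ((x t - d) ^ 2 + y t ^ 2))
      = (1 / 2) * (x s * py s - y s * px s) ^ 2 + (1 / 2) * d ^ 2 * px s ^ 2
        + d * x s * (m₁ / Real.sqrt ((x s + d) ^ 2 + y s ^ 2)
          - m₂ / Real.sqrt ((x s - d) ^ 2 + y s ^ 2)) := by
  have hG : ∀ t, HasDerivAt (fun t => (1 / 2) * (x t * py t - y t * px t) ^ 2
      + (1 / 2) * d ^ 2 * px t ^ 2 + d * x t * (m₁ / √((x t + d) ^ 2 + y t ^ 2)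
        - m₂ / √((x t - d) ^ 2 + y t ^ 2))) 0 t := by
    intro t
    have hr₁ : 0 < (x t - -d) ^ 2 + y t ^ 2 := sq_add_sq_pos_of_ne (hne₁ t)
    have hr₂ : 0 < (x t - d) ^ 2 + y t ^ 2 := sq_add_sq_pos_of_ne (hne₂ t)
    have hU₁ := (hx t).const_div_sqrt_dist m₁ (-d) (hy t) hr₁
    have hU₂ := (hx t).const_div_sqrt_dist m₂ d (hy t) hr₂
    simp only [sub_neg_eq_add] at hr₁ hU₁
    have hL := ((hx t).fun_mul (hpy t)).fun_sub ((hy t).fun_mul (hpx t))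
    refine (((hL.fun_pow 2).const_mul (1 / 2)).fun_add (((hpx t).fun_pow 2).const_mul _)
      |>.fun_add (((hx t).const_mul d).fun_mul (hU₁.fun_sub hU₂))).congr_deriv ?_
    rw [rpow_three_halves hr₁.le, rpow_three_halves hr₂.le]
    linear_combination
      euler_center_identity (-d) m₁ (x t) (y t) (px t) (py t) _ (sqrt_pos.2 hr₁).ne'
        (by rw [sq_sqrt hr₁.le]; ring)
      + euler_center_identity d m₂ (x t) (y t) (px t) (py t) _ (sqrt_pos.2 hr₂).ne'
        (sq_sqrt hr₂.le)
  exact is_const_of_deriv_eq_zero (fun t => (hG t).differentiableAt) (fun t => (hG t).deriv)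

/-- Euler's second integral `G` of the two-center problem is constant along solutions of
Hamilton's equations for the two-center Hamiltonian. -/
theorem euler_integral_constant (m₁ m₂ d : ℝ) (hm₁ : 0 < m₁) (hm₂ : 0 < m₂) (hd : 0 < d)
    (x y px py : ℝ → ℝ)
    (hne₁ : ∀ t, (x t, y t) ≠ (-d, 0))
    (hne₂ : ∀ t, (x t, y t) ≠ (d, 0))
    (hx : ∀ t, HasDerivAt x (px t) t)
    (hy : ∀ t, HasDerivAt y (py t) t)
    (hpx : ∀ t, HasDerivAt px
      (-(m₁ * (x t + d) / ((x t + d) ^ 2 + y t ^ 2) ^ ((3 : ℝ) / 2))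
        - m₂ * (x t - d) / ((x t - d) ^ 2 + y t ^ 2) ^ ((3 : ℝ) / 2)) t)
    (hpy : ∀ t, HasDerivAt py
      (-(m₁ * y t / ((x t + d) ^ 2 + y t ^ 2) ^ ((3 : ℝ) / 2))
        - m₂ * y t / ((x t - d) ^ 2 + y t ^ 2) ^ ((3 : ℝ) / 2)) t) :
    ∀ t s : ℝ,
      (1 / 2) * (x t * py t - y t * px t) ^ 2 + (1 / 2) * d ^ 2 * px t ^ 2
        + d * x t * (m₁ / Real.sqrt ((x t + d) ^ 2 + y t ^ 2)
          - m₂ / Real.sqrt ((x t - d) ^ 2 + y t ^ 2))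
      = (1 / 2) * (x s * py s - y s * px s) ^ 2 + (1 / 2) * d ^ 2 * px s ^ 2
        + d * x s * (m₁ / Real.sqrt ((x s + d) ^ 2 + y s ^ 2)
          - m₂ / Real.sqrt ((x s - d) ^ 2 + y s ^ 2)) :=
  euler_integral_constant_general m₁ m₂ d x y px py hne₁ hne₂ hx hy hpx hpy
end
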